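/- arXiv:2410.14588 — 2 statements merged into one kernel-verified Lean document; each statement's English description precedes it below -/
import Mathlib

section
/- Let f be a two-component equal-weight mixture (weights 1/2) and f̂ an estimated mixture such that TV(f(x|g_i), f̂(x|g_i)) ≤ ε for each component i. Then for each component i, E_{x∼f}[ |f(g_i|x) − f̂(g_i|x)| ] ≤ 3ε, where f(g_i|x) = (1/2)f(x|g_i)/f(x) and f̂(g_i|x) = (1/2)f̂(x|g_i)/f̂(x) are the posterior membership probabilities. -/
/-!
Write `F = ½ f₀ + ½ f₁`, `G = ½ g₀ + ½ g₁`, `a = ½ fᵢ` and `b = ½ gᵢ`. Pointwise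
`(a/F - b/G) F = (a - b) + (b/G)(G - F)` with `0 ≤ b/G ≤ 1`, so the `F`-weighted
posterior error is at most `|a - b| + |F - G|`. Integrating, the first term
contributes `TV(fᵢ, gᵢ) ≤ ε` and the second `2 TV(F, G) ≤ 2ε`, since the total variation
distance of two mixtures is at most the average of the componentwise distances.
-/

open MeasureTheory

/-- Total variation distance between densities: `TV(p,q) = (1/2)∫|p−q|`. -/
noncomputable def tvDist {α : Type*} [MeasurableSpace α] (μ : Measure α)
    (p q : α → ℝ) : ℝ :=
  (1 / 2) * ∫ x, |p x - q x| ∂μ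

theorem abs_div_sub_div_mul_le {a b F G : ℝ} (hF : 0 < F) (hG : 0 < G) (hb : 0 ≤ b)
    (hbG : b ≤ G) : |a / F - b / G| * F ≤ |a - b| + |F - G| := by
  have hratio : |b / G| ≤ 1 := by
    rwa [abs_of_nonneg (div_nonneg hb hG.le), div_le_one hG]
  have hsplit : (a / F - b / G) * F = (a - b) + b / G * (G - F) := by
    field_simp
    ring
  calc |a / F - b / G| * F = |(a - b) + b / G * (G - F)| := by
        rw [← hsplit, abs_mul, abs_of_pos hF]
    _ ≤ |a - b| + |b / G| * |G - F| := by
        rw [← abs_mul]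
        exact abs_add_le _ _
    _ ≤ |a - b| + 1 * |G - F| := by gcongr
    _ = |a - b| + |F - G| := by rw [one_mul, abs_sub_comm G F]

section TotalVariation

variable {α : Type*} [MeasurableSpace α] {μ : Measure α}

theorem tvDist_mix_le {u v : ℝ} (hu : 0 ≤ u) (hv : 0 ≤ v) {p₀ p₁ q₀ q₁ : α → ℝ}
    (hp₀ : Integrable p₀ μ) (hp₁ : Integrable p₁ μ) (hq₀ : Integrable q₀ μ)
    (hq₁ : Integrable q₁ μ) :
    tvDist μ (fun x => u * p₀ x + v * p₁ x) (fun x => u * q₀ x + v * q₁ x)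
      ≤ u * tvDist μ p₀ q₀ + v * tvDist μ p₁ q₁ := by
  have hint₀ : Integrable (fun x => u * |p₀ x - q₀ x|) μ := ((hp₀.sub hq₀).abs).const_mul u
  have hint₁ : Integrable (fun x => v * |p₁ x - q₁ x|) μ := ((hp₁.sub hq₁).abs).const_mul v
  have hmono : ∫ x, |(u * p₀ x + v * p₁ x) - (u * q₀ x + v * q₁ x)| ∂μ
      ≤ ∫ x, (u * |p₀ x - q₀ x| + v * |p₁ x - q₁ x|) ∂μ := by
    refine integral_mono_of_nonneg (ae_of_all _ fun x => abs_nonneg _) (hint₀.add hint₁)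
      (ae_of_all _ fun x => ?_)
    calc |(u * p₀ x + v * p₁ x) - (u * q₀ x + v * q₁ x)|
        = |u * (p₀ x - q₀ x) + v * (p₁ x - q₁ x)| := by ring_nf
      _ ≤ |u * (p₀ x - q₀ x)| + |v * (p₁ x - q₁ x)| := abs_add_le _ _
      _ = u * |p₀ x - q₀ x| + v * |p₁ x - q₁ x| := by
        rw [abs_mul, abs_mul, abs_of_nonneg hu, abs_of_nonneg hv]
  rw [integral_add hint₀ hint₁, integral_const_mul, integral_const_mul] at hmono
  unfold tvDist
  linarith

theorem integral_abs_posterior_sub_le {w : ℝ} (hw : 0 ≤ w) {p q F G : α → ℝ}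
    (hp : Integrable p μ) (hq : Integrable q μ) (hFi : Integrable F μ) (hGi : Integrable G μ)
    (hF : ∀ x, 0 < F x) (hG : ∀ x, 0 < G x) (hq₀ : ∀ x, 0 ≤ q x) (hqG : ∀ x, w * q x ≤ G x) :
    ∫ x, |w * p x / F x - w * q x / G x| * F x ∂μ
      ≤ 2 * w * tvDist μ p q + 2 * tvDist μ F G := by
  have hint₁ : Integrable (fun x => w * |p x - q x|) μ := ((hp.sub hq).abs).const_mul w
  have hint₂ : Integrable (fun x => |F x - G x|) μ := (hFi.sub hGi).abs
  have hmono : ∫ x, |w * p x / F x - w * q x / G x| * F x ∂μ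
      ≤ ∫ x, (w * |p x - q x| + |F x - G x|) ∂μ := by
    refine integral_mono_of_nonneg
      (ae_of_all _ fun x => mul_nonneg (abs_nonneg _) (hF x).le) (hint₁.add hint₂)
      (ae_of_all _ fun x => ?_)
    have := abs_div_sub_div_mul_le (a := w * p x) (hF x) (hG x) (mul_nonneg hw (hq₀ x)) (hqG x)
    rwa [← mul_sub, abs_mul, abs_of_nonneg hw] at this
  rw [integral_add hint₁ hint₂, integral_const_mul] at hmono
  unfold tvDist
  linarith

end TotalVariation

theorem stmt_2_general {α : Type*} [MeasurableSpace α] (μ : Measure α)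
    (f g : Fin 2 → α → ℝ) (ε : ℝ)
    (hg : ∀ i x, 0 ≤ g i x)
    (hfi : ∀ i, Integrable (f i) μ) (hgi : ∀ i, Integrable (g i) μ)
    -- mixture marginals
    (F G : α → ℝ)
    (hF : ∀ x, F x = (1 / 2) * f 0 x + (1 / 2) * f 1 x)
    (hG : ∀ x, G x = (1 / 2) * g 0 x + (1 / 2) * g 1 x)
    (hFpos : ∀ x, 0 < F x) (hGpos : ∀ x, 0 < G x)
    (hTV : ∀ i, tvDist μ (f i) (g i) ≤ ε) :
    ∀ i : Fin 2,
      ∫ x, |(1 / 2) * f i x / F x - (1 / 2) * g i x / G x| * F x ∂μ ≤ 3 * ε := by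
  intro i
  obtain rfl : F = fun x => (1 / 2) * f 0 x + (1 / 2) * f 1 x := funext hF
  obtain rfl : G = fun x => (1 / 2) * g 0 x + (1 / 2) * g 1 x := funext hG
  have hmix := tvDist_mix_le (μ := μ) (u := 1 / 2) (v := 1 / 2) (by norm_num) (by norm_num)
    (hfi 0) (hfi 1) (hgi 0) (hgi 1)
  have hgG : ∀ x, (1 / 2) * g i x ≤ (1 / 2) * g 0 x + (1 / 2) * g 1 x := fun x => by
    fin_cases i <;> simp [hg 0 x, hg 1 x]
  have hFi : Integrable (fun x => (1 / 2) * f 0 x + (1 / 2) * f 1 x) μ :=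
    ((hfi 0).const_mul _).add ((hfi 1).const_mul _)
  have hGi : Integrable (fun x => (1 / 2) * g 0 x + (1 / 2) * g 1 x) μ :=
    ((hgi 0).const_mul _).add ((hgi 1).const_mul _)
  have hpost := integral_abs_posterior_sub_le (by norm_num) (hfi i) (hgi i) hFi hGi
    hFpos hGpos (hg i) hgG
  linarith [hTV 0, hTV 1, hTV i]

/-- For equal-weight two-component mixtures whose component densities are within
TV distance `ε`, the expected (under the true mixture) absolute error of the
estimated posterior membership probabilities is at most `3ε`, for each component. -/
theorem stmt_2 {α : Type*} [MeasurableSpace α] (μ : Measure α)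
    (f g : Fin 2 → α → ℝ) (ε : ℝ)
    (hf : ∀ i x, 0 ≤ f i x) (hg : ∀ i x, 0 ≤ g i x)
    (hfi : ∀ i, Integrable (f i) μ) (hgi : ∀ i, Integrable (g i) μ)
    (hfn : ∀ i, ∫ x, f i x ∂μ = 1) (hgn : ∀ i, ∫ x, g i x ∂μ = 1)
    -- mixture marginals
    (F G : α → ℝ)
    (hF : ∀ x, F x = (1 / 2) * f 0 x + (1 / 2) * f 1 x)
    (hG : ∀ x, G x = (1 / 2) * g 0 x + (1 / 2) * g 1 x)
    (hFpos : ∀ x, 0 < F x) (hGpos : ∀ x, 0 < G x)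
    (hTV : ∀ i, tvDist μ (f i) (g i) ≤ ε) :
    ∀ i : Fin 2,
      ∫ x, |(1 / 2) * f i x / F x - (1 / 2) * g i x / G x| * F x ∂μ ≤ 3 * ε :=
  stmt_2_general μ f g ε hg hfi hgi F G hF hG hFpos hGpos hTV
end

section
/- Let C be a concept class (of subsets of X) with VC dimension D. Then the class of k-fold intersections { c_1 ∩ c_2 ∩ ... ∩ c_k : c_i ∈ C } has VC dimension at most O(k D log k); concretely, at most 2Dk log₂(3k). -/
/-- A class of sets `C` shatters a finite set `s`. -/
def Shatters {α : Type*} (C : Set (Set α)) (s : Finset α) : Prop :=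
  ∀ t ⊆ s, ∃ c ∈ C, ∀ x ∈ s, x ∈ c ↔ x ∈ t

/-- The VC dimension of `C` is at most `d`: no set of size `> d` is shattered. -/
def VCDimLE {α : Type*} (C : Set (Set α)) (d : ℕ) : Prop :=
  ∀ s : Finset α, Shatters C s → s.card ≤ d

/-- The subgraph (threshold) set class associated to a real-valued function class. -/
def subgraphClass {α : Type*} (G : Set (α → ℝ)) : Set (Set (α × ℝ)) :=
  {c | ∃ g ∈ G, c = {xy : α × ℝ | g xy.1 > xy.2}}

/-- The pseudodimension of `G` is at most `d`: the VC dimension of the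
subgraph class of `G` is at most `d`. -/
def PdimLE {α : Type*} (G : Set (α → ℝ)) (d : ℕ) : Prop :=
  VCDimLE (subgraphClass G) d

/-- Sauer-Shelah: a family with VC dim ≤ D of subsets of `s` has size at most
`∑_{i ≤ D} (card s).choose i`. -/
lemma sauer_aux {α : Type*} [DecidableEq α] (s : Finset α) (D : ℕ)
    (F : Finset (Finset α)) (hFs : F ⊆ s.powerset)
    (hvc : ∀ u : Finset α, F.Shatters u → u.card ≤ D) :
    F.card ≤ ∑ i ∈ Finset.range (D + 1), s.card.choose i := by
  classical
  refine (Finset.card_le_card_shatterer F).trans ?_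
  have hsub : F.shatterer ⊆ (Finset.range (D + 1)).biUnion (fun i => s.powersetCard i) := by
    intro u hu
    rw [Finset.mem_shatterer] at hu
    obtain ⟨w, hwF, hw⟩ := hu.exists_superset
    have hus : u ⊆ s := hw.trans (Finset.mem_powerset.1 (hFs hwF))
    simp only [Finset.mem_biUnion, Finset.mem_range, Finset.mem_powersetCard]
    exact ⟨u.card, Nat.lt_succ_of_le (hvc u hu), hus, rfl⟩
  refine (Finset.card_le_card hsub).trans ?_
  refine (Finset.card_biUnion_le).trans ?_
  exact le_of_eq (Finset.sum_congr rfl fun i _ => Finset.card_powersetCard i s)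

/-- Numeric bound: `∑_{i ≤ D} m.choose i * x^D ≤ (1+x)^m` for `0 < x ≤ 1`. -/
lemma sum_choose_le {m D : ℕ} {x : ℝ} (hx : 0 < x) (hx1 : x ≤ 1) :
    (∑ i ∈ Finset.range (D + 1), (m.choose i : ℝ)) * x ^ D ≤ (1 + x) ^ m := by
  have h1 : (∑ i ∈ Finset.range (D + 1), (m.choose i : ℝ)) * x ^ D
      ≤ ∑ i ∈ Finset.range (D + 1), (m.choose i : ℝ) * x ^ i := by
    rw [Finset.sum_mul]
    refine Finset.sum_le_sum fun i hi => ?_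
    have : x ^ D ≤ x ^ i :=
      pow_le_pow_of_le_one hx.le hx1 (Nat.lt_succ_iff.1 (Finset.mem_range.1 hi))
    exact mul_le_mul_of_nonneg_left this (Nat.cast_nonneg _)
  have h2 : ∑ i ∈ Finset.range (D + 1), (m.choose i : ℝ) * x ^ i
      ≤ ∑ i ∈ Finset.range (D + m + 1), (m.choose i : ℝ) * x ^ i := by
    refine Finset.sum_le_sum_of_subset_of_nonneg ?_ fun i _ _ => ?_
    · exact Finset.range_subset_range.2 (by omega)
    · positivity
  have h3 : ∑ i ∈ Finset.range (D + m + 1), (m.choose i : ℝ) * x ^ i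
      = ∑ i ∈ Finset.range (m + 1), (m.choose i : ℝ) * x ^ i := by
    refine (Finset.sum_subset (Finset.range_subset_range.2 (by omega)) fun i _ hi => ?_).symm
    have : m < i := by simpa using Finset.mem_range.not.1 hi
    simp [Nat.choose_eq_zero_of_lt this]
  have h4 : ∑ i ∈ Finset.range (m + 1), (m.choose i : ℝ) * x ^ i = (1 + x) ^ m := by
    calc ∑ i ∈ Finset.range (m + 1), (m.choose i : ℝ) * x ^ i
        = ∑ i ∈ Finset.range (m + 1), x ^ i * 1 ^ (m - i) * (m.choose i : ℝ) := by
          refine Finset.sum_congr rfl fun i hi => ?_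
          rw [one_pow]; ring
      _ = (x + 1) ^ m := (add_pow x 1 m).symm
      _ = (1 + x) ^ m := by ring
  linarith [h1, h2, h3.le, h4.le]

/-- VC dimension of `k`-fold intersections (Blumer et al., Lemma 3.2.3):
if `C` has VC dimension at most `D`, then the class of intersections of `k`
members of `C` has VC dimension at most `2 D k log₂(3k)`. -/
theorem stmt_10 {α : Type*} (C : Set (Set α)) (D k : ℕ) (hk : 0 < k)
    (hC : VCDimLE C D) :
    ∀ s : Finset α,
      Shatters {c : Set α | ∃ cs : Fin k → Set α, (∀ i, cs i ∈ C) ∧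
          c = ⋂ i, cs i} s →
      (s.card : ℝ) ≤ 2 * D * k * Real.logb 2 (3 * k) := by
  classical
  intro s hS
  set m := s.card with hm
  -- the family of traces of C on s
  set F : Finset (Finset α) :=
    s.powerset.filter (fun t => ∃ c ∈ C, s.filter (· ∈ c) = t) with hF
  -- Step 1: 2^m ≤ F.card ^ k
  have key : ∀ t : s.powerset, ∃ g : Fin k → {u // u ∈ F},
      ∀ x ∈ s, (x ∈ (t : Finset α) ↔ ∀ i, x ∈ (g i : Finset α)) := by
    rintro ⟨t, ht⟩
    obtain ⟨c, hcP, hc⟩ := hS t (Finset.mem_powerset.1 ht)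
    obtain ⟨cs, hcs, rfl⟩ := hcP
    refine ⟨fun i => ⟨s.filter (· ∈ cs i), ?_⟩, ?_⟩
    · exact Finset.mem_filter.2 ⟨Finset.mem_powerset.2 (Finset.filter_subset _ _),
        ⟨cs i, hcs i, rfl⟩⟩
    · intro x hx
      rw [← hc x hx]
      simp [Set.mem_iInter, hx]
  choose g hg using key
  have hinj : Function.Injective g := by
    rintro ⟨t, ht⟩ ⟨t', ht'⟩ hgt
    have : t = t' := by
      apply Finset.ext
      intro x
      constructor
      · intro hx
        have hxs : x ∈ s := Finset.mem_powerset.1 ht hx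
        exact (hg ⟨t', ht'⟩ x hxs).2 (by rw [← hgt]; exact (hg ⟨t, ht⟩ x hxs).1 hx)
      · intro hx
        have hxs : x ∈ s := Finset.mem_powerset.1 ht' hx
        exact (hg ⟨t, ht⟩ x hxs).2 (by rw [hgt]; exact (hg ⟨t', ht'⟩ x hxs).1 hx)
    exact Subtype.ext this
  have hcard : 2 ^ m ≤ F.card ^ k := by
    have := Fintype.card_le_of_injective g hinj
    simpa [Finset.card_powerset] using this
  -- Step 2: F has VC dim ≤ D, so F.card ≤ ∑_{i ≤ D} m.choose i
  have hvcF : ∀ u : Finset α, F.Shatters u → u.card ≤ D := by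
    intro u hu
    obtain ⟨w₀, hw₀F, hw₀⟩ := hu.exists_superset
    have hus : u ⊆ s := hw₀.trans (Finset.mem_powerset.1 (Finset.mem_filter.1 hw₀F).1)
    refine hC u ?_
    intro t htu
    obtain ⟨w, hwF, hw⟩ := hu htu
    obtain ⟨-, c, hcC, hcw⟩ := Finset.mem_filter.1 hwF
    refine ⟨c, hcC, fun x hx => ?_⟩
    have hxs : x ∈ s := hus hx
    constructor
    · intro hxc
      rw [← hw]
      exact Finset.mem_inter.2 ⟨hx, by rw [← hcw]; exact Finset.mem_filter.2 ⟨hxs, hxc⟩⟩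
    · intro hxt
      rw [← hw] at hxt
      have := Finset.mem_inter.1 hxt
      rw [← hcw] at this
      exact (Finset.mem_filter.1 this.2).2
  have hFle : F.card ≤ ∑ i ∈ Finset.range (D + 1), m.choose i :=
    sauer_aux s D F (Finset.filter_subset _ _) hvcF
  -- Step 3: real arithmetic
  set x : ℝ := Real.log 2 / (2 * k) with hxdef
  have hk0 : (0:ℝ) < k := by exact_mod_cast hk
  have hlog2 : (0.6931471803 : ℝ) < Real.log 2 := Real.log_two_gt_d9
  have hlog2' : Real.log 2 < 0.6931471808 := Real.log_two_lt_d9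
  have hx : 0 < x := by positivity
  have hx1 : x ≤ 1 := by
    have hk1 : (1:ℝ) ≤ k := by exact_mod_cast hk
    rw [hxdef, div_le_one (by positivity)]
    nlinarith
  have hN : (F.card : ℝ) * x ^ D ≤ (1 + x) ^ m := by
    calc (F.card : ℝ) * x ^ D
        ≤ (∑ i ∈ Finset.range (D + 1), (m.choose i : ℝ)) * x ^ D := by
          refine mul_le_mul_of_nonneg_right ?_ (by positivity)
          exact_mod_cast hFle.trans_eq (by push_cast; rfl)
      _ ≤ (1 + x) ^ m := sum_choose_le hx hx1
  have hmain : (2:ℝ) ^ m * x ^ (D * k) ≤ (1 + x) ^ (m * k) := by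
    have h2 : (2:ℝ) ^ m ≤ (F.card : ℝ) ^ k := by exact_mod_cast hcard
    calc (2:ℝ) ^ m * x ^ (D * k) ≤ (F.card : ℝ) ^ k * x ^ (D * k) := by
          refine mul_le_mul_of_nonneg_right h2 (by positivity)
      _ = ((F.card : ℝ) * x ^ D) ^ k := by rw [mul_pow, ← pow_mul]
      _ ≤ ((1 + x) ^ m) ^ k := by
          refine pow_le_pow_left₀ (by positivity) hN k
      _ = (1 + x) ^ (m * k) := by rw [← pow_mul]
  -- take logarithms
  have hlogineq : (m : ℝ) * Real.log 2 + (D * k : ℝ) * Real.log x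
      ≤ (m * k : ℝ) * Real.log (1 + x) := by
    have hl := Real.log_le_log (by positivity) hmain
    rw [Real.log_mul (by positivity) (by positivity), Real.log_pow, Real.log_pow, Real.log_pow] at hl
    push_cast at hl ⊢
    linarith
  have hlog1x : Real.log (1 + x) ≤ x := by
    have := Real.add_one_le_exp x
    calc Real.log (1 + x) ≤ Real.log (Real.exp x) := by
          refine Real.log_le_log (by positivity) (by linarith)
      _ = x := Real.log_exp x
  have hstep : (m : ℝ) * (Real.log 2 / 2) ≤ (D * k : ℝ) * Real.log (1 / x) := by
    have h1 : (m * k : ℝ) * Real.log (1 + x) ≤ (m * k : ℝ) * x := by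
      refine mul_le_mul_of_nonneg_left hlog1x (by positivity)
    have h2 : (m * k : ℝ) * x = (m : ℝ) * (Real.log 2 / 2) := by
      rw [hxdef]; field_simp
    rw [Real.log_div one_ne_zero (ne_of_gt hx), Real.log_one]
    nlinarith [hlogineq]
  -- conclude
  have h1x : (1:ℝ) / x = 2 * k / Real.log 2 := by
    rw [hxdef]; field_simp
  have hlb : Real.log (1 / x) ≤ Real.log (3 * k) := by
    refine Real.log_le_log (by rw [h1x]; positivity) ?_
    rw [h1x, div_le_iff₀ (by positivity)]
    nlinarith
  have hlogpos : 0 < Real.log 2 := by linarith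
  have hfinal : (m : ℝ) ≤ 2 * D * k * (Real.log (3 * k) / Real.log 2) := by
    have hD : (0:ℝ) ≤ (D : ℝ) * k := by positivity
    have h0 := hstep.trans (mul_le_mul_of_nonneg_left hlb hD)
    have h2 : (m:ℝ) * Real.log 2 ≤ 2 * D * k * Real.log (3 * k) := by linarith
    calc (m:ℝ) = m * Real.log 2 / Real.log 2 := by field_simp
      _ ≤ 2 * D * k * Real.log (3 * k) / Real.log 2 := by gcongr
      _ = 2 * D * k * (Real.log (3 * k) / Real.log 2) := by ring
  calc (m : ℝ) ≤ 2 * D * k * (Real.log (3 * k) / Real.log 2) := hfinal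
    _ = 2 * D * k * Real.logb 2 (3 * k) := by rw [Real.logb]
end
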